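/- Let A be an n×n real matrix with all entries nonnegative that is primitive, i.e., there exists k ≥ 1 such that every entry of Aᵏ is strictly positive, and let c be its dominant eigenvalue (the real eigenvalue with c > |c'| for all other eigenvalues c'). Then there is an eigenvector v ∈ ℝ^n for c whose components are all strictly positive, and v is unique up to multiplication by a nonzero scalar: any eigenvector of A for the eigenvalue c is a scalar multiple of v. -/

import Mathlib

/-!
Every complex eigenvalue of `A` has modulus at most `c`, so `tr (A ^ N) ≤ n c ^ N`. On the other
hand, if `y ≥ 0` is nonzero and `r • y ≤ A y`, then positivity of `A ^ k` gives
`tr (A ^ (m + k)) ≥ C r ^ m` with `C > 0`; hence `r ≤ c`. For a real eigenvector `w` of `c` the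
triangle inequality gives `c |w| ≤ A |w|`. If this were strict somewhere, `y = A ^ k |w|` would
satisfy `(c + ε) y ≤ A y`, which is impossible; so `|w|` is an eigenvector, and it is positive
because `c ^ k |w| = A ^ k |w| > 0`. Thus no eigenvector of `c` has a zero entry, and two of them
are proportional, since a suitable combination has a zero entry. That `c > 0` comes from traces
as well: if `c ≤ 0`, the spectrum is `{c}`, so `tr (A ^ N) = n c ^ N`, while `tr (A ^ k)` and
`tr (A ^ (k + 1))` are both positive.
-/

open Matrix Filter Topology

lemma le_of_forall_mul_pow_le {C D r c : ℝ} (hC : 0 < C) (hc : 0 ≤ c)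
    (h : ∀ m : ℕ, C * r ^ m ≤ D * c ^ m) : r ≤ c := by
  by_contra! hcr
  have hr : 0 < r := hc.trans_lt hcr
  have hlim : Tendsto (fun m : ℕ => D * (c / r) ^ m) atTop (𝓝 0) := by
    simpa using (tendsto_pow_atTop_nhds_zero_of_lt_one (div_nonneg hc hr.le)
      ((div_lt_one hr).2 hcr)).const_mul D
  obtain ⟨m, hm⟩ := (hlim.eventually (gt_mem_nhds hC)).exists
  rw [div_pow, mul_div_assoc', div_lt_iff₀ (pow_pos hr m)] at hm
  linarith [h m]

lemma Finite.exists_pos_forall_mul_le {α : Type*} [Finite α] (f g : α → ℝ)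
    (hg : ∀ a, 0 < g a) : ∃ κ > 0, ∀ a, κ * f a ≤ g a := by
  have hsmall : ∀ a, ∀ᶠ κ in 𝓝[>] (0 : ℝ), κ * f a < g a := fun a =>
    (((continuous_id.mul continuous_const).tendsto' 0 0 (by simp)).mono_left
      nhdsWithin_le_nhds).eventually (gt_mem_nhds (hg a))
  obtain ⟨κ, hκ, hκf⟩ := (eventually_mem_nhdsWithin.and (eventually_all.2 hsmall)).exists
  exact ⟨κ, hκ, fun a => (hκf a).le⟩

namespace Matrix

variable {ι : Type*} [Fintype ι]

section Nonneg

variable {A B : Matrix ι ι ℝ}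

lemma mulVec_mono (hA : ∀ i j, 0 ≤ A i j) {x y : ι → ℝ} (h : x ≤ y) : A *ᵥ x ≤ A *ᵥ y :=
  fun i => Finset.sum_le_sum fun j _ => mul_le_mul_of_nonneg_left (h j) (hA i j)

lemma abs_mulVec_le (hA : ∀ i j, 0 ≤ A i j) (w : ι → ℝ) : |A *ᵥ w| ≤ A *ᵥ |w| := fun i => by
  simp only [Pi.abs_apply, mulVec, dotProduct]
  refine (Finset.abs_sum_le_sum_abs _ _).trans_eq (Finset.sum_congr rfl fun j _ => ?_)
  rw [abs_mul, abs_of_nonneg (hA i j)]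

lemma mulVec_pos (hB : ∀ i j, 0 < B i j) {v : ι → ℝ} (hv : 0 ≤ v) (hv0 : v ≠ 0) (i : ι) :
    0 < (B *ᵥ v) i := by
  obtain ⟨j, hj⟩ := Function.ne_iff.mp hv0
  exact Finset.sum_pos' (fun l _ => mul_nonneg (hB i l).le (hv l))
    ⟨j, Finset.mem_univ _, mul_pos (hB i j) ((hv j).lt_of_ne' hj)⟩

lemma trace_mul_pos (hA : ∀ i j, 0 ≤ A i j) (hA0 : A ≠ 0) (hB : ∀ i j, 0 < B i j) :
    0 < (A * B).trace := by
  obtain ⟨i, j, hij⟩ : ∃ i j, A i j ≠ 0 := by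
    by_contra! h
    exact hA0 (Matrix.ext h)
  exact Finset.sum_pos' (fun i _ => Finset.sum_nonneg fun l _ => mul_nonneg (hA i l) (hB l i).le)
    ⟨i, Finset.mem_univ _, Finset.sum_pos' (fun l _ => mul_nonneg (hA i l) (hB l i).le)
      ⟨j, Finset.mem_univ _, mul_pos ((hA i j).lt_of_ne' hij) (hB j i)⟩⟩

end Nonneg

theorem exists_eq_smul_of_forall_apply_ne_zero {K : Type*} [Field K] {A : Matrix ι ι K} {c : K}
    (hsupp : ∀ u : ι → K, u ≠ 0 → A *ᵥ u = c • u → ∀ i, u i ≠ 0) {v : ι → K}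
    (hAv : A *ᵥ v = c • v) (hv : ∀ i, v i ≠ 0) {u : ι → K} (hu0 : u ≠ 0)
    (hAu : A *ᵥ u = c • u) : ∃ α : K, α ≠ 0 ∧ u = α • v := by
  obtain ⟨i, hi⟩ := Function.ne_iff.mp hu0
  refine ⟨u i / v i, div_ne_zero hi (hv i), ?_⟩
  by_contra hne
  refine hsupp (u - (u i / v i) • v) (sub_ne_zero.mpr hne) ?_ i ?_
  · rw [mulVec_sub, mulVec_smul, hAu, hAv, smul_sub, smul_comm]
  · simp [div_mul_cancel₀ _ (hv i)]

variable [DecidableEq ι]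

section Spectrum

lemma exists_mem_spectrum_pow_eq_of_mem_roots_charpoly_pow {M : Matrix ι ι ℂ} {N : ℕ}
    (hN : N ≠ 0) {x : ℂ} (hx : x ∈ (M ^ N).charpoly.roots) :
    ∃ μ ∈ spectrum ℂ M, μ ^ N = x := by
  have hxN : x ∈ spectrum ℂ (M ^ N) :=
    mem_spectrum_of_isRoot_charpoly (Polynomial.isRoot_of_mem_roots hx)
  rwa [spectrum.map_pow_of_pos M (Nat.pos_of_ne_zero hN)] at hxN

lemma card_roots_charpoly (M : Matrix ι ι ℂ) :
    Multiset.card M.charpoly.roots = Fintype.card ι := by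
  rw [Polynomial.splits_iff_card_roots.mp (IsAlgClosed.splits _), charpoly_natDegree_eq_dim]

lemma norm_trace_pow_le {M : Matrix ι ι ℂ} {b : ℝ} (hb : ∀ μ ∈ spectrum ℂ M, ‖μ‖ ≤ b)
    (N : ℕ) : ‖(M ^ N).trace‖ ≤ Fintype.card ι * b ^ N := by
  rcases eq_or_ne N 0 with rfl | hN
  · simp
  rw [trace_eq_sum_roots_charpoly]
  calc ‖(M ^ N).charpoly.roots.sum‖ ≤ ((M ^ N).charpoly.roots.map (‖·‖)).sum :=
        norm_multiset_sum_le _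
    _ ≤ Multiset.card ((M ^ N).charpoly.roots.map (‖·‖)) • b ^ N := by
        refine Multiset.sum_le_card_nsmul _ _ fun x hx => ?_
        obtain ⟨z, hz, rfl⟩ := Multiset.mem_map.mp hx
        obtain ⟨μ, hμ, rfl⟩ := exists_mem_spectrum_pow_eq_of_mem_roots_charpoly_pow hN hz
        rw [norm_pow]
        exact pow_le_pow_left₀ (norm_nonneg μ) (hb μ hμ) N
    _ = Fintype.card ι * b ^ N := by
        rw [Multiset.card_map, card_roots_charpoly, nsmul_eq_mul]

lemma trace_pow_eq_card_mul_pow {M : Matrix ι ι ℂ} {c : ℂ} (hc : spectrum ℂ M ⊆ {c})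
    (N : ℕ) : (M ^ N).trace = Fintype.card ι * c ^ N := by
  rcases eq_or_ne N 0 with rfl | hN
  · simp
  have hroots : (M ^ N).charpoly.roots = Multiset.replicate (Fintype.card ι) (c ^ N) := by
    rw [← card_roots_charpoly (M ^ N)]
    refine Multiset.eq_replicate_card.mpr fun x hx => ?_
    obtain ⟨μ, hμ, rfl⟩ := exists_mem_spectrum_pow_eq_of_mem_roots_charpoly_pow hN hx
    rw [hc hμ]
  rw [trace_eq_sum_roots_charpoly, hroots, Multiset.sum_replicate, nsmul_eq_mul]

lemma ofReal_trace_pow (A : Matrix ι ι ℝ) (N : ℕ) :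
    ((A ^ N).trace : ℂ) = (A.map Complex.ofReal ^ N).trace := by
  rw [show A.map Complex.ofReal = Complex.ofRealHom.mapMatrix A from rfl, ← map_pow]
  exact AddMonoidHom.map_trace Complex.ofRealHom (A ^ N)

variable {A : Matrix ι ι ℝ}

lemma trace_pow_le_of_norm_le {b : ℝ}
    (hb : ∀ μ ∈ spectrum ℂ (A.map Complex.ofReal), ‖μ‖ ≤ b) (N : ℕ) :
    (A ^ N).trace ≤ Fintype.card ι * b ^ N := by
  have h := norm_trace_pow_le hb N
  rw [← ofReal_trace_pow, Complex.norm_real, Real.norm_eq_abs] at h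
  exact (le_abs_self _).trans h

lemma trace_pow_eq_of_spectrum_subset {c : ℝ}
    (hc : spectrum ℂ (A.map Complex.ofReal) ⊆ {(c : ℂ)}) (N : ℕ) :
    (A ^ N).trace = Fintype.card ι * c ^ N := by
  exact_mod_cast (ofReal_trace_pow A N).trans (trace_pow_eq_card_mul_pow hc N)

end Spectrum

section Powers

variable {A B : Matrix ι ι ℝ}

lemma pow_mulVec_eq_pow_smul {v : ι → ℝ} {c : ℝ} (h : A *ᵥ v = c • v) (m : ℕ) :
    A ^ m *ᵥ v = c ^ m • v := by
  induction m with
  | zero => simp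
  | succ m ih => rw [pow_succ', ← mulVec_mulVec, ih, mulVec_smul, h, smul_smul, pow_succ]

lemma pow_smul_le_pow_mulVec (hA : ∀ i j, 0 ≤ A i j) {r : ℝ} (hr : 0 ≤ r) {y : ι → ℝ}
    (h : r • y ≤ A *ᵥ y) (m : ℕ) : r ^ m • y ≤ A ^ m *ᵥ y := by
  induction m with
  | zero => simp
  | succ m ih =>
    calc r ^ (m + 1) • y = r ^ m • (r • y) := by rw [pow_succ, mul_smul]
      _ ≤ r ^ m • (A *ᵥ y) := smul_le_smul_of_nonneg_left h (pow_nonneg hr m)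
      _ = A *ᵥ (r ^ m • y) := (mulVec_smul ..).symm
      _ ≤ A *ᵥ (A ^ m *ᵥ y) := mulVec_mono hA ih
      _ = A ^ (m + 1) *ᵥ y := by rw [mulVec_mulVec, pow_succ']

lemma exists_pos_mul_pow_le_trace (hA : ∀ i j, 0 ≤ A i j) (hB : ∀ i j, 0 < B i j)
    {y : ι → ℝ} (hy : 0 ≤ y) (hy0 : y ≠ 0) {r : ℝ} (hr : 0 ≤ r) (h : r • y ≤ A *ᵥ y) :
    ∃ C > 0, ∀ m : ℕ, C * r ^ m ≤ (A ^ m * B).trace := by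
  obtain ⟨κ, hκ, hκB⟩ := Finite.exists_pos_forall_mul_le (fun p : ι × ι => y p.1)
    (fun p => B p.1 p.2) fun p => hB p.1 p.2
  have hS : 0 < ∑ i, y i := by
    obtain ⟨i, hi⟩ := Function.ne_iff.mp hy0
    exact Finset.sum_pos' (fun i _ => hy i) ⟨i, Finset.mem_univ _, (hy i).lt_of_ne' hi⟩
  refine ⟨κ * ∑ i, y i, mul_pos hκ hS, fun m => ?_⟩
  calc κ * (∑ i, y i) * r ^ m = κ * ∑ j, (r ^ m • y) j := by
        simp only [Pi.smul_apply, smul_eq_mul, ← Finset.mul_sum]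
        ring
    _ ≤ κ * ∑ j, (A ^ m *ᵥ y) j := by
        gcongr with j
        exact pow_smul_le_pow_mulVec hA hr h m j
    _ = ∑ j, ∑ i, (A ^ m) j i * (κ * y i) := by
        simp only [mulVec, dotProduct, Finset.mul_sum]
        ring_nf
    _ ≤ ∑ j, ∑ i, (A ^ m) j i * B i j := by
        gcongr with j _ i
        · exact pow_apply_nonneg hA m j i
        · exact hκB (i, j)
    _ = (A ^ m * B).trace := by simp only [trace, diag, mul_apply]

end Powers

namespace IsPrimitive

variable {A : Matrix ι ι ℝ} {c : ℝ}

theorem le_of_smul_le_mulVec (hA : A.IsPrimitive) (hc : 0 ≤ c)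
    (hb : ∀ μ ∈ spectrum ℂ (A.map Complex.ofReal), ‖μ‖ ≤ c) {y : ι → ℝ} (hy : 0 ≤ y)
    (hy0 : y ≠ 0) {r : ℝ} (hr : 0 ≤ r) (h : r • y ≤ A *ᵥ y) : r ≤ c := by
  obtain ⟨k, -, hAk⟩ := hA.exists_pos_pow
  obtain ⟨C, hC, hlow⟩ := exists_pos_mul_pow_le_trace hA.nonneg hAk hy hy0 hr h
  refine le_of_forall_mul_pow_le (D := Fintype.card ι * c ^ k) hC hc fun m => ?_
  calc C * r ^ m ≤ (A ^ m * A ^ k).trace := hlow m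
    _ = (A ^ (m + k)).trace := by rw [pow_add]
    _ ≤ Fintype.card ι * c ^ (m + k) := trace_pow_le_of_norm_le hb _
    _ = Fintype.card ι * c ^ k * c ^ m := by ring

theorem pos_of_forall_mem_spectrum_norm_lt [Nonempty ι] (hA : A.IsPrimitive)
    (hdom : ∀ μ ∈ spectrum ℂ (A.map Complex.ofReal), μ ≠ c → ‖μ‖ < c) : 0 < c := by
  obtain ⟨k, hk, hAk⟩ := hA.exists_pos_pow
  by_contra! hc
  have hsub : spectrum ℂ (A.map Complex.ofReal) ⊆ {(c : ℂ)} := fun μ hμ => by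
    by_contra hne
    exact ((norm_nonneg μ).trans_lt (hdom μ hμ hne)).not_ge hc
  have hA0 : A ≠ 0 := by
    rintro rfl
    simpa [zero_pow hk.ne'] using hAk (Classical.arbitrary ι) (Classical.arbitrary ι)
  have htrace_k : 0 < (A ^ k).trace := Finset.sum_pos (fun i _ => hAk i i) Finset.univ_nonempty
  have htrace_succ : 0 < (A * A ^ k).trace := trace_mul_pos hA.nonneg hA0 hAk
  rw [← pow_succ', trace_pow_eq_of_spectrum_subset hsub, pow_succ, ← mul_assoc] at htrace_succ
  rw [trace_pow_eq_of_spectrum_subset hsub] at htrace_k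
  exact hc.not_gt (pos_of_mul_pos_right htrace_succ htrace_k.le)

theorem pos_of_nonneg_of_mulVec_eq_smul (hA : A.IsPrimitive) (hc : 0 ≤ c) {v : ι → ℝ}
    (hv : 0 ≤ v) (hv0 : v ≠ 0) (hAv : A *ᵥ v = c • v) (i : ι) : 0 < v i := by
  obtain ⟨k, -, hAk⟩ := hA.exists_pos_pow
  have hpos := mulVec_pos hAk hv hv0 i
  rw [pow_mulVec_eq_pow_smul hAv, Pi.smul_apply, smul_eq_mul] at hpos
  exact pos_of_mul_pos_right hpos (pow_nonneg hc k)

theorem mulVec_abs_eq_smul_abs (hA : A.IsPrimitive) (hc : 0 ≤ c)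
    (hb : ∀ μ ∈ spectrum ℂ (A.map Complex.ofReal), ‖μ‖ ≤ c) {w : ι → ℝ} (hw0 : w ≠ 0)
    (hAw : A *ᵥ w = c • w) : A *ᵥ |w| = c • |w| := by
  obtain ⟨k, -, hAk⟩ := hA.exists_pos_pow
  have hsuper : c • |w| ≤ A *ᵥ |w| := fun i => by
    simpa [hAw, abs_mul, abs_of_nonneg hc] using abs_mulVec_le hA.nonneg w i
  by_contra hne
  set z := A *ᵥ |w| - c • |w|
  have hz : 0 ≤ z := sub_nonneg.mpr hsuper
  have hz0 : z ≠ 0 := sub_ne_zero.mpr hne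
  set y := A ^ k *ᵥ |w|
  have hy : ∀ i, 0 < y i := mulVec_pos hAk (abs_nonneg w) (mt (Pi.abs_eq_zero w).mp hw0)
  have hAy : A *ᵥ y = c • y + A ^ k *ᵥ z := by
    rw [mulVec_sub, mulVec_smul, add_sub_cancel, mulVec_mulVec, mulVec_mulVec, ← pow_succ,
      pow_succ']
  obtain ⟨ε, hε, hεz⟩ := Finite.exists_pos_forall_mul_le y (A ^ k *ᵥ z) (mulVec_pos hAk hz hz0)
  have hsuper' : (c + ε) • y ≤ A *ᵥ y := fun i => by
    simpa [hAy, add_mul] using hεz i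
  obtain ⟨i₀, -⟩ := Function.ne_iff.mp hw0
  have hy0 : y ≠ 0 := fun h => (hy i₀).ne' (congrFun h i₀)
  have := hA.le_of_smul_le_mulVec hc hb (fun i => (hy i).le) hy0 (by positivity) hsuper'
  linarith

end IsPrimitive

end Matrix

/-- Perron–Frobenius for primitive matrices (eigenvector part): if `c` is the
dominant eigenvalue of a nonnegative primitive matrix `A`, then there is an
entrywise strictly positive eigenvector `v` for `c`, and any eigenvector of `A`
for the eigenvalue `c` is a scalar multiple of `v`. -/
theorem perron_frobenius_primitive_positive_eigenvector
    (n : ℕ)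
    (A : Matrix (Fin n) (Fin n) ℝ)
    (hA : ∀ i j, 0 ≤ A i j)
    (hprim : ∃ k : ℕ, 1 ≤ k ∧ ∀ i j, 0 < (A ^ k) i j)
    (c : ℝ)
    (hc : c ∈ spectrum ℝ A)
    (hdom : ∀ μ : ℂ, μ ∈ spectrum ℂ (A.map Complex.ofReal) → μ ≠ (c : ℂ) →
      ‖μ‖ < c) :
    ∃ v : Fin n → ℝ, (∀ i, 0 < v i) ∧ A.mulVec v = c • v ∧
      ∀ u : Fin n → ℝ, u ≠ 0 → A.mulVec u = c • u →
        ∃ α : ℝ, α ≠ 0 ∧ u = α • v := by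
  have hA' : A.IsPrimitive := ⟨hA, hprim⟩
  obtain ⟨w, hw⟩ := (Module.End.hasEigenvalue_iff_mem_spectrum.mpr
    ((spectrum_toLin' A).symm ▸ hc)).exists_hasEigenvector
  have hw0 : w ≠ 0 := hw.2
  have hAw : A *ᵥ w = c • w := by simpa using hw.apply_eq_smul
  obtain ⟨i₀, -⟩ := Function.ne_iff.mp hw0
  have : Nonempty (Fin n) := ⟨i₀⟩
  have hc0 : 0 < c := hA'.pos_of_forall_mem_spectrum_norm_lt hdom
  have hb : ∀ μ ∈ spectrum ℂ (A.map Complex.ofReal), ‖μ‖ ≤ c := fun μ hμ => by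
    rcases eq_or_ne μ c with rfl | hne
    · rw [Complex.norm_real, Real.norm_of_nonneg hc0.le]
    · exact (hdom μ hμ hne).le
  have habs : ∀ u, u ≠ 0 → A *ᵥ u = c • u → A *ᵥ |u| = c • |u| ∧ ∀ i, 0 < |u| i :=
    fun u hu0 hAu =>
      have hAu' := hA'.mulVec_abs_eq_smul_abs hc0.le hb hu0 hAu
      ⟨hAu', hA'.pos_of_nonneg_of_mulVec_eq_smul hc0.le (abs_nonneg u)
        (mt (Pi.abs_eq_zero u).mp hu0) hAu'⟩
  obtain ⟨hAv, hv⟩ := habs w hw0 hAw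
  refine ⟨|w|, hv, hAv, fun u hu0 hAu => ?_⟩
  exact exists_eq_smul_of_forall_apply_ne_zero
    (fun u hu0 hAu i => abs_pos.mp ((habs u hu0 hAu).2 i)) hAv (fun i => (hv i).ne') hu0 hAu
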